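/- Let n ≥ 3 and γ ∈ ℝ. Let C_n be the cycle graph on Fin n and define J : Finset (Fin n) → ℤ by J(S) = H₀(C_n[S]) for S a proper subset and J(univ) = 2. Let g : Finset (Fin n) → ℝ satisfy Σ_{Q ⊆ Fin n, Q ≠ ∅} (−1)^{|Q|−1} g(Q) = 0 (vanishing of all geometric contributions), and set f(Q) := g(Q) − γ·J(Q). Then the n-partite information I_f(Fin n) := Σ_{P ⊆ Fin n, P ≠ ∅} (−1)^{|P|−1} f(P) equals (−1)^n · 2γ. (For a simple annular arrangement of N = n ≥ 3 subsystems of a topologically ordered ground state with entanglement entropies f(Q) = (boundary-law term) − (number of disjoint boundary components)·log 𝒟, the N-partite information is the topological invariant (−1)^N χ S_topo with χ = 2 and S_topo = γ = log 𝒟.) -/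

import Mathlib

/-- For a simple graph `G` and a set of vertices `S`, the number of connected
components of the induced subgraph `G[S]`. -/
noncomputable def H0 {V : Type*} (G : SimpleGraph V) (S : Set V) : ℕ :=
  Nat.card (G.induce S).ConnectedComponent

/-- The boundary-component count `J` for an annular collection of `n` subsystems:
for a proper subset `S` of the cycle `C_n` it is the number of connected
components of the induced subgraph, while the full annulus has two boundary
components. -/
noncomputable def Jcount (n : ℕ) (S : Finset (Fin n)) : ℤ :=
  if S = (Finset.univ : Finset (Fin n)) then 2
  else (H0 (SimpleGraph.cycleGraph n) (↑S : Set (Fin n)) : ℤ)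

/-!
The multipartite information `I_f = multiInfo univ f` is linear in `f` and vanishes on `g`,
so it equals `-γ · I_J`. A connected component of a proper subset `P` of the cycle is a run
of consecutive vertices, counted by its last vertex `i` (`i ∈ P`, `i + 1 ∉ P`); hence `J` is
the sum over `i` of the indicators of `i ∈ P ∧ i + 1 ∉ P`, plus `2` at `P = univ`. Each
indicator has vanishing multipartite information as soon as a third vertex exists, because
toggling that vertex is a sign-reversing involution; only the term at `univ` survives and
gives `(-1) ^ (n - 1) · 2`.
-/

open Finset SimpleGraph
open scoped Fin.CommRing

section Alternating

variable {α R : Type*} [DecidableEq α] [CommRing R]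

theorem Finset.sum_powerset_filter_mem_notMem_neg_one_pow_card {Q : Finset α} {a b c : α}
    (hc : c ∈ Q) (hca : c ≠ a) (hcb : c ≠ b) :
    ∑ P ∈ Q.powerset with a ∈ P ∧ b ∉ P, (-1 : R) ^ #P = 0 := by
  refine sum_involution (fun P _ => if c ∈ P then P.erase c else insert c P) ?_ ?_ ?_ ?_
  · intro P _
    split_ifs with h
    · rw [← card_erase_add_one h, pow_succ]; ring
    · rw [card_insert_of_notMem h, pow_succ]; ring
  · intro P _ _
    split_ifs with h
    · exact (ne_of_mem_of_not_mem' h (notMem_erase c P)).symm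
    · exact ne_of_mem_of_not_mem' (mem_insert_self c P) h
  · intro P hP
    simp only [mem_filter, mem_powerset] at hP ⊢
    split_ifs
    · simp [hP, hca.symm, erase_subset_iff_of_mem hc]
    · simp [hP, hcb.symm, insert_subset hc]
  · intro P _
    split_ifs with h h' h' <;> simp_all

def multiInfo (Q : Finset α) : (Finset α → R) →ₗ[R] R :=
  ∑ P ∈ Q.powerset with P ≠ ∅, (-1 : R) ^ (#P - 1) • LinearMap.proj P

theorem multiInfo_apply (Q : Finset α) (f : Finset α → R) :
    multiInfo Q f = ∑ P ∈ Q.powerset with P ≠ ∅, (-1 : R) ^ (#P - 1) * f P := by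
  simp [multiInfo, LinearMap.sum_apply]

theorem multiInfo_single {Q P : Finset α} (hPQ : P ⊆ Q) (hP : P.Nonempty) (r : R) :
    multiInfo Q (Pi.single P r) = (-1) ^ (#P - 1) * r := by
  rw [multiInfo_apply, sum_eq_single_of_mem P (by simp [hPQ, hP.ne_empty])]
  · simp
  · intro P' _ hne
    simp [hne]

theorem multiInfo_ite_mem_and_notMem {Q : Finset α} (hQ : 2 < #Q) (a b : α) :
    multiInfo Q (fun P => if a ∈ P ∧ b ∉ P then (1 : R) else 0) = 0 := by
  obtain ⟨c, hc, hcab⟩ :=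
    exists_mem_notMem_of_card_lt_card ((card_le_two (a := a) (b := b)).trans_lt hQ)
  simp only [mem_insert, mem_singleton, not_or] at hcab
  obtain ⟨hca, hcb⟩ := hcab
  calc multiInfo Q (fun P => if a ∈ P ∧ b ∉ P then (1 : R) else 0)
      = ∑ P ∈ Q.powerset with a ∈ P ∧ b ∉ P, -(-1 : R) ^ #P := by
        rw [multiInfo_apply]
        simp only [mul_ite, mul_one, mul_zero]
        rw [← sum_filter, filter_filter]
        refine sum_congr (filter_congr fun P _ => ?_) fun P hP => ?_
        · exact ⟨And.right, fun h => ⟨ne_empty_of_mem h.1, h⟩⟩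
        · have ha : a ∈ P := (mem_filter.1 hP).2.1
          rw [← Nat.sub_add_cancel (card_pos.2 ⟨a, ha⟩), pow_succ]
          simp
    _ = 0 := by
        rw [sum_neg_distrib, sum_powerset_filter_mem_notMem_neg_one_pow_card hc hca hcb, neg_zero]

end Alternating

namespace SimpleGraph

variable {V β : Type*} {G : SimpleGraph V}

theorem Reachable.apply_eq_of_adj {r : V → β} (hadj : ∀ ⦃u v⦄, G.Adj u v → r u = r v)
    {u v : V} (h : G.Reachable u v) : r u = r v := by
  obtain ⟨p⟩ := h
  induction p with
  | nil => rfl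
  | cons huv _ ih => exact (hadj huv).trans ih

def connectedComponentEquivRange {r : V → V} (hadj : ∀ ⦃u v⦄, G.Adj u v → r u = r v)
    (hreach : ∀ v, G.Reachable v (r v)) : G.ConnectedComponent ≃ Set.range r where
  toFun := ConnectedComponent.lift (fun v => ⟨r v, v, rfl⟩)
    fun _ _ p _ => Subtype.ext (Reachable.apply_eq_of_adj hadj p.reachable)
  invFun x := G.connectedComponentMk x
  left_inv := ConnectedComponent.ind fun v => ConnectedComponent.sound (hreach v).symm
  right_inv := by
    rintro ⟨_, v, rfl⟩
    exact Subtype.ext (Reachable.apply_eq_of_adj hadj (hreach v)).symm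

end SimpleGraph

section CycleRuns

variable {n : ℕ} {S : Finset (Fin (n + 2))}

theorem exists_add_natCast_add_one_notMem (hS : S ≠ univ) (v : Fin (n + 2)) :
    ∃ k : ℕ, v + k + 1 ∉ S := by
  obtain ⟨w, hw⟩ := not_forall.1 (mt eq_univ_iff_forall.2 hS)
  refine ⟨(w - v - 1).val, ?_⟩
  rwa [Fin.cast_val_eq_self, show v + (w - v - 1) + 1 = w by ring]

noncomputable def runLength (hS : S ≠ univ) (v : Fin (n + 2)) : ℕ :=
  Nat.find (exists_add_natCast_add_one_notMem hS v)

/-- The last element of the maximal run `v, v + 1, …, runEnd hS v` of consecutive elements of `S`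
(for `v ∈ S`). -/
noncomputable def runEnd (hS : S ≠ univ) (v : Fin (n + 2)) : Fin (n + 2) :=
  v + runLength hS v

variable {v : Fin (n + 2)}

theorem runLength_eq_zero_iff (hS : S ≠ univ) : runLength hS v = 0 ↔ v + 1 ∉ S := by
  simp [runLength]

theorem runLength_of_add_one_mem (hS : S ≠ univ) (h : v + 1 ∈ S) :
    runLength hS v = runLength hS (v + 1) + 1 := by
  have hsucc : ∀ k : ℕ, v + ((k + 1 : ℕ) : Fin (n + 2)) = v + 1 + k := fun k => by
    push_cast; ring
  have hex : ∃ k : ℕ, v + ((k + 1 : ℕ) : Fin (n + 2)) + 1 ∉ S := by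
    simpa only [hsucc] using exists_add_natCast_add_one_notMem hS (v + 1)
  rw [runLength, Nat.find_comp_succ _ hex (by simpa using h)]
  congr 1
  exact Nat.find_congr' (by simp only [hsucc, implies_true])

theorem add_one_runEnd_notMem (hS : S ≠ univ) : runEnd hS v + 1 ∉ S :=
  Nat.find_spec (exists_add_natCast_add_one_notMem hS v)

theorem runEnd_of_add_one_notMem (hS : S ≠ univ) (h : v + 1 ∉ S) : runEnd hS v = v := by
  simp [runEnd, (runLength_eq_zero_iff hS).2 h]

theorem runEnd_of_add_one_mem (hS : S ≠ univ) (h : v + 1 ∈ S) :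
    runEnd hS v = runEnd hS (v + 1) := by
  rw [runEnd, runEnd, runLength_of_add_one_mem hS h]
  push_cast
  ring

@[elab_as_elim]
theorem run_induction (hS : S ≠ univ) {motive : Fin (n + 2) → Prop}
    (last : ∀ v, v + 1 ∉ S → motive v)
    (step : ∀ v, v + 1 ∈ S → motive (v + 1) → motive v) (v : Fin (n + 2)) : motive v := by
  induction hk : runLength hS v generalizing v with
  | zero => exact last v ((runLength_eq_zero_iff hS).1 hk)
  | succ k ih =>
    have h : v + 1 ∈ S := not_not.1 ((runLength_eq_zero_iff hS).not.1 (by omega))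
    exact step v h (ih (v + 1) (by rw [runLength_of_add_one_mem hS h] at hk; omega))

theorem runEnd_mem (hS : S ≠ univ) (hv : v ∈ S) : runEnd hS v ∈ S := by
  induction v using run_induction hS with
  | last v h => rwa [runEnd_of_add_one_notMem hS h]
  | step v h ih => rw [runEnd_of_add_one_mem hS h]; exact ih h

theorem reachable_runEnd (hS : S ≠ univ) (hv : v ∈ S) :
    ((cycleGraph (n + 2)).induce (S : Set (Fin (n + 2)))).Reachable ⟨v, hv⟩
      ⟨runEnd hS v, runEnd_mem hS hv⟩ := by
  induction v using run_induction hS with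
  | last v h => simp only [runEnd_of_add_one_notMem hS h]; rfl
  | step v h ih =>
    have hadj :
        ((cycleGraph (n + 2)).induce (S : Set (Fin (n + 2)))).Adj ⟨v, hv⟩ ⟨v + 1, h⟩ :=
      cycleGraph_adj.2 (Or.inr (add_sub_cancel_left v 1))
    have hend : (⟨runEnd hS v, runEnd_mem hS hv⟩ : (S : Set (Fin (n + 2)))) =
        ⟨runEnd hS (v + 1), runEnd_mem hS h⟩ :=
      Subtype.ext (runEnd_of_add_one_mem hS h)
    rw [hend]
    exact hadj.reachable.trans (ih h)

theorem runEnd_eq_of_adj (hS : S ≠ univ) {u w : Fin (n + 2)} (hu : u ∈ S) (hw : w ∈ S)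
    (h : (cycleGraph (n + 2)).Adj u w) : runEnd hS u = runEnd hS w := by
  rcases cycleGraph_adj.1 h with h | h
  · rw [sub_eq_iff_eq_add'] at h
    subst h
    exact (runEnd_of_add_one_mem hS hu).symm
  · rw [sub_eq_iff_eq_add'] at h
    subst h
    exact runEnd_of_add_one_mem hS hw

theorem H0_cycleGraph_of_ne_univ (hS : S ≠ univ) :
    H0 (cycleGraph (n + 2)) S = #{i | i ∈ S ∧ i + 1 ∉ S} := by
  set r : ↥(S : Set (Fin (n + 2))) → ↥(S : Set (Fin (n + 2))) :=
    fun v => ⟨runEnd hS v, runEnd_mem hS v.2⟩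
  have hrange : Set.range r = {v | v.1 + 1 ∉ S} := by
    ext v
    refine ⟨?_, fun h => ⟨v, Subtype.ext (runEnd_of_add_one_notMem hS h)⟩⟩
    rintro ⟨u, rfl⟩
    exact add_one_runEnd_notMem hS
  have e := connectedComponentEquivRange (r := r)
    (fun u w h => Subtype.ext (runEnd_eq_of_adj hS u.2 w.2 h)) (fun v => reachable_runEnd hS v.2)
  rw [H0, Nat.card_congr e, hrange, Set.coe_ofPred,
    Nat.card_congr (Equiv.subtypeSubtypeEquivSubtypeInter _ (fun i => i + 1 ∉ S)),
    Nat.card_eq_fintype_card, Fintype.card_subtype]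
  rfl

end CycleRuns

theorem Jcount_eq_sum_add_single {n : ℕ} : (fun P => (Jcount (n + 2) P : ℝ)) =
    ∑ i, (fun P => if i ∈ P ∧ i + 1 ∉ P then (1 : ℝ) else 0) + Pi.single univ 2 := by
  funext P
  simp only [Finset.sum_apply, Pi.add_apply]
  by_cases hP : P = univ
  · subst hP
    simp [Jcount]
  · rw [Jcount, if_neg hP, H0_cycleGraph_of_ne_univ hP, card_filter, Pi.single_eq_of_ne hP]
    push_cast
    simp

/-- For a simple annular arrangement of `N = n ≥ 3` subsystems of a topologically
ordered ground state with entanglement entropies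
`f(Q) = g(Q) - γ J(Q)` (boundary-law term minus `(number of disjoint boundary
components) · log 𝒟`), where the geometric contributions `g` cancel in the
alternating sum, the `n`-partite information is the topological invariant
`(-1)^n χ S_topo` with `χ = 2` and `S_topo = γ = log 𝒟`. -/
theorem multiInfo_annular_topological (n : ℕ) (hn : 3 ≤ n) (γ : ℝ)
    (g : Finset (Fin n) → ℝ)
    (hg : ∑ Q ∈ (Finset.univ : Finset (Fin n)).powerset.filter (· ≠ ∅),
        (-1 : ℝ) ^ (Q.card - 1) * g Q = 0)
    (f : Finset (Fin n) → ℝ)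
    (hf : ∀ Q, f Q = g Q - γ * (Jcount n Q : ℝ)) :
    ∑ P ∈ (Finset.univ : Finset (Fin n)).powerset.filter (· ≠ ∅),
      (-1 : ℝ) ^ (P.card - 1) * f P
    = (-1 : ℝ) ^ n * (2 * γ) := by
  obtain ⟨m, rfl⟩ : ∃ m, n = m + 2 := ⟨n - 2, by omega⟩
  have hcard : 2 < #(univ : Finset (Fin (m + 2))) := by
    rw [card_univ, Fintype.card_fin]
    omega
  have hJ : multiInfo univ (fun P => (Jcount (m + 2) P : ℝ)) = (-1) ^ (m + 1) * 2 := by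
    rw [Jcount_eq_sum_add_single, map_add, map_sum,
      sum_eq_zero fun i _ => multiInfo_ite_mem_and_notMem hcard i (i + 1), zero_add,
      multiInfo_single subset_rfl univ_nonempty, card_univ, Fintype.card_fin]
    rfl
  have hfJ : f = g - γ • fun P => (Jcount (m + 2) P : ℝ) := funext fun Q => by simp [hf]
  rw [← multiInfo_apply, hfJ, map_sub, map_smul, multiInfo_apply, hg, hJ, smul_eq_mul]
  ring
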